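/- arXiv:1007.2117 — 5 statements merged into one kernel-verified Lean document; each statement's English description precedes it below -/
import Mathlib

section
/- For n = 2^p with p ≥ 4, among all decompositions n = m·2^k with m = 2^j, k = p − j (0 ≤ j ≤ p), the flop count F_S(2^j, p−j) is minimized at j = 3, i.e., F_S(8, p−3) ≤ F_S(2^j, p−j) for all 0 ≤ j ≤ p. -/
/-!
With `m = 2^j` and `k = p - j` the subtracted term `6·4^k·m^2 = 6·4^p` does not depend on `j`, so
only `7^(p-j)·4^j·(2·2^j + 5)` has to be minimised. Passing from `j` to `j + 1` multiplies it by
`4(4·2^j + 5) / (7(2·2^j + 5))`, which is below `1` exactly when `2^(j+1) < 15`, i.e. for `j ≤ 2`;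
so the sequence decreases up to `j = 3` and increases afterwards.
-/

/-- `7^(3-j)·4^j·(2·2^j + 5) ≥ 4^3·(2·2^3 + 5)` with the powers of `7` cleared; equality at `j = 3`. -/
theorem seven_pow_mul_le_two_pow_sq_mul (j : ℕ) :
    (192 : ℤ) * 7 ^ j ≤ 49 * (2 ^ j) ^ 2 * (2 * 2 ^ j + 5) := by
  rcases lt_or_ge j 3 with hj | hj
  · interval_cases j <;> norm_num
  induction j, hj using Nat.le_induction with
  | base => norm_num
  | succ i hi ih =>
    have h8 : (8 : ℤ) ≤ 2 ^ i := by
      calc (8 : ℤ) = 2 ^ 3 := by norm_num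
        _ ≤ 2 ^ i := pow_le_pow_right₀ (by norm_num) hi
    calc (192 : ℤ) * 7 ^ (i + 1) = 7 * (192 * 7 ^ i) := by ring
      _ ≤ 7 * (49 * (2 ^ i) ^ 2 * (2 * 2 ^ i + 5)) := by linarith
      _ ≤ 49 * (2 ^ (i + 1)) ^ 2 * (2 * 2 ^ (i + 1) + 5) := by
        rw [pow_succ (2 : ℤ) i]
        nlinarith [mul_le_mul_of_nonneg_left h8 (sq_nonneg ((2 : ℤ) ^ i))]

theorem strassen_leaf_cost_le {p j : ℕ} (hp : 3 ≤ p) (hj : j ≤ p) :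
    (1344 : ℤ) * 7 ^ (p - 3) ≤ 7 ^ (p - j) * (2 ^ j) ^ 2 * (2 * 2 ^ j + 5) := by
  have hsplit : (7 : ℤ) ^ (p - 3) * 7 ^ 3 = 7 ^ (p - j) * 7 ^ j := by
    rw [pow_sub_mul_pow 7 hp, pow_sub_mul_pow 7 hj]
  have hpos : (0 : ℤ) ≤ 7 ^ (p - j) := by positivity
  linarith [mul_le_mul_of_nonneg_left (seven_pow_mul_le_two_pow_sq_mul j) hpos]

theorem four_pow_sub_mul_two_pow_sq {p j : ℕ} (hj : j ≤ p) :
    (4 : ℤ) ^ (p - j) * (2 ^ j) ^ 2 = 4 ^ p := by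
  rw [← pow_mul, mul_comm j 2, pow_mul, show (2 : ℤ) ^ 2 = 4 by norm_num, pow_sub_mul_pow 4 hj]

/-- For `n = 2^p`, `p ≥ 4`, among decompositions `m = 2^j`, `k = p − j`, the flop
count `F_S(2^j, p−j)` is minimized at `j = 3`. -/
theorem strassen_optimal_j (p : ℕ) (hp : 4 ≤ p)
    (F : ℕ → ℕ → ℤ)
    (hF : ∀ m k : ℕ, F m k = 7 ^ k * m ^ 2 * (2 * m + 5) - 6 * 4 ^ k * m ^ 2) :
    ∀ j : ℕ, j ≤ p → F 8 (p - 3) ≤ F (2 ^ j) (p - j) := by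
  intro j hj
  have hp3 : 3 ≤ p := by omega
  rw [hF, hF]
  push_cast
  linarith [four_pow_sub_mul_two_pow_sq hp3, four_pow_sub_mul_two_pow_sq hj,
    strassen_leaf_cost_le hp3 hj]
end

section
/- Define f₁(p) = F_S(17, p−4)/F_S(8, p−3) for integers p ≥ 4, where F_S(m,k) = 7^k·m^2·(2m+5) − 6·4^k·m^2. Then f₁(p) = 289·(4^p·2401 − 7^p·1664)/(12544·(4^p·49 − 7^p·32)), f₁ is monotonically decreasing in p, f₁(4) = 3179/2624, and f₁(p) → 3757/3136 as p → ∞. -/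
/-!
With `r = (7/4)^p`, the closed form equals `3757/3136 + c / (r - 49/32)` for a constant `c > 0`.
Since `r` increases to `∞` with `p` and already exceeds `49/32` at `p = 1`, `f₁` decreases to `3757/3136`.
-/

open Filter Set

/-- `F_S(m, k)`: the flop count of Strassen's algorithm with `k` recursion levels on blocks of order `m`. -/
def strassenFlops (m k : ℕ) : ℝ := 7 ^ k * m ^ 2 * (2 * m + 5) - 6 * 4 ^ k * m ^ 2

/- Numerator and denominator on the right are the same multiple, `-307328/3`, of those on the
left, so no denominator needs to be nonzero. -/
lemma strassenFlops_div_eq (n : ℕ) :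
    strassenFlops 17 n / strassenFlops 8 (n + 1) =
      289 * (4 ^ (n + 4) * 2401 - 7 ^ (n + 4) * 1664) /
        (12544 * (4 ^ (n + 4) * 49 - 7 ^ (n + 4) * 32)) := by
  rw [← mul_div_mul_left _ _ (by norm_num : (-307328 / 3 : ℝ) ≠ 0), strassenFlops, strassenFlops]
  congr 1 <;> push_cast <;> ring

lemma div_lt_seven_div_four_pow {p : ℕ} (hp : p ≠ 0) : (49 / 32 : ℝ) < (7 / 4) ^ p :=
  calc (49 / 32 : ℝ) < 7 / 4 := by norm_num
    _ ≤ (7 / 4) ^ p := le_self_pow₀ (by norm_num) hp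

lemma closedForm_eq_add_div {p : ℕ} (hp : p ≠ 0) :
    (289 * (4 ^ p * 2401 - 7 ^ p * 1664) / (12544 * (4 ^ p * 49 - 7 ^ p * 32)) : ℝ) =
      3757 / 3136 + 42483 / 401408 / ((7 / 4) ^ p - 49 / 32) := by
  have hr : (7 / 4 : ℝ) ^ p - 49 / 32 ≠ 0 := (sub_pos.2 (div_lt_seven_div_four_pow hp)).ne'
  have hx : (4 : ℝ) ^ p ≠ 0 := by positivity
  rw [div_pow] at hr ⊢
  generalize (4 : ℝ) ^ p = x at *
  generalize (7 : ℝ) ^ p = y at *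
  have hden : y * 32 - x * 49 ≠ 0 := by
    contrapose! hr
    field_simp
    linear_combination hr
  have hden' : x * 49 - y * 32 ≠ 0 := fun h => hden (by linear_combination -h)
  field_simp
  ring

lemma antitoneOn_add_div_sub {a b c : ℝ} (hb : 0 ≤ b) :
    AntitoneOn (fun r => a + b / (r - c)) (Ioi c) := by
  intro r hr s _ hrs
  have hr' : 0 < r - c := sub_pos.2 hr
  exact add_le_add_right (div_le_div_of_nonneg_left hb hr' (sub_le_sub_right hrs c)) a

lemma tendsto_add_div_sub_atTop (a b c : ℝ) :
    Tendsto (fun r => a + b / (r - c)) atTop (nhds a) := by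
  have h : Tendsto (fun r : ℝ => r - c) atTop atTop := by
    simpa only [sub_eq_add_neg, id] using tendsto_atTop_add_const_right atTop (-c) tendsto_id
  simpa using tendsto_const_nhds.add (tendsto_const_nhds.div_atTop h)

/-- Properties of `f₁(p) = F_S(17,p−4)/F_S(8,p−3)`: its closed form, monotone
decrease, value at `p = 4`, and limit `3757/3136`. -/
theorem strassen_f1_properties
    (F : ℕ → ℕ → ℝ)
    (hF : ∀ m k : ℕ, F m k = 7 ^ k * m ^ 2 * (2 * m + 5) - 6 * 4 ^ k * m ^ 2)
    (f₁ : ℕ → ℝ)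
    (hf₁ : ∀ p : ℕ, 4 ≤ p → f₁ p = F 17 (p - 4) / F 8 (p - 3)) :
    (∀ p : ℕ, 4 ≤ p →
      f₁ p = 289 * (4 ^ p * 2401 - 7 ^ p * 1664) / (12544 * (4 ^ p * 49 - 7 ^ p * 32))) ∧
    (∀ p q : ℕ, 4 ≤ p → p ≤ q → f₁ q ≤ f₁ p) ∧
    f₁ 4 = 3179 / 2624 ∧
    Tendsto f₁ atTop (nhds (3757 / 3136)) := by
  obtain rfl : F = strassenFlops := funext₂ hF
  have closedForm (p : ℕ) (hp : 4 ≤ p) :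
      f₁ p = 289 * (4 ^ p * 2401 - 7 ^ p * 1664) / (12544 * (4 ^ p * 49 - 7 ^ p * 32)) := by
    obtain ⟨n, rfl⟩ := Nat.exists_eq_add_of_le' hp
    rw [hf₁ _ hp, show n + 4 - 4 = n by omega, show n + 4 - 3 = n + 1 by omega]
    exact strassenFlops_div_eq n
  set g : ℝ → ℝ := fun r => 3757 / 3136 + 42483 / 401408 / (r - 49 / 32)
  have hg (p : ℕ) (hp : 4 ≤ p) : f₁ p = g ((7 / 4) ^ p) := by
    rw [closedForm p hp, closedForm_eq_add_div (by omega)]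
  refine ⟨closedForm, fun p q hp hpq => ?_, ?_, ?_⟩
  · rw [hg p hp, hg q (hp.trans hpq)]
    exact antitoneOn_add_div_sub (by norm_num) (div_lt_seven_div_four_pow (by omega))
      (div_lt_seven_div_four_pow (by omega)) (pow_le_pow_right₀ (by norm_num) hpq)
  · rw [hf₁ 4 le_rfl, strassenFlops, strassenFlops]
    norm_num
  · refine ((tendsto_add_div_sub_atTop (3757 / 3136) (42483 / 401408) (49 / 32)).comp
      (tendsto_pow_atTop_atTop_of_one_lt (by norm_num : (1 : ℝ) < 7 / 4))).congr' ?_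
    filter_upwards [eventually_ge_atTop 4] with p hp
    exact (hg p hp).symm
end

section
/- Define f₂(p) = F_S(16, p−4)/F_S(8, p−3) for integers p ≥ 4, where F_S(m,k) = 7^k·m^2·(2m+5) − 6·4^k·m^2. Then f₂(p) = (4^p·7203 − 7^p·4736)/(147·(4^p·49 − 7^p·32)), f₂ is monotonically decreasing in p, f₂(4) = 124/123, and f₂(p) → 148/147 as p → ∞. -/
/-!
Writing `t = (4/7)^p`, both flop counts are linear in `7^p` and `4^p`, and
`f₂(p) = 1 + 32 / (4704 - 7203 t)`. For `p ≥ 1` the denominator is positive and increases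
with `p` since `t` decreases, so `f₂` decreases; as `t → 0` it tends to `1 + 32/4704 = 148/147`.
-/

open Filter Topology

lemma pow_eq_div_pow_mul_pow {K : Type*} [Field K] (a : K) {b : K} (hb : b ≠ 0) (p : ℕ) :
    a ^ p = (a / b) ^ p * b ^ p := by
  rw [div_pow, div_mul_cancel₀ _ (pow_ne_zero p hb)]

noncomputable def f₂Formula (p : ℕ) : ℝ := 1 + 32 / (4704 - 7203 * (4 / 7) ^ p)

lemma f₂Formula_denom_pos {p : ℕ} (hp : 1 ≤ p) : 0 < 4704 - 7203 * ((4 : ℝ) / 7) ^ p := by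
  have : ((4 : ℝ) / 7) ^ p ≤ 4 / 7 := pow_le_of_le_one (by norm_num) (by norm_num) (by omega)
  linarith

lemma f₂Formula_le_of_le {p q : ℕ} (hp : 1 ≤ p) (hpq : p ≤ q) : f₂Formula q ≤ f₂Formula p := by
  have hpow : ((4 : ℝ) / 7) ^ q ≤ (4 / 7) ^ p := pow_le_pow_of_le_one (by norm_num) (by norm_num) hpq
  unfold f₂Formula
  gcongr
  exact f₂Formula_denom_pos hp

lemma tendsto_f₂Formula : Tendsto f₂Formula atTop (𝓝 (148 / 147)) := by
  have ht : Tendsto (fun p : ℕ => ((4 : ℝ) / 7) ^ p) atTop (𝓝 0) :=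
    tendsto_pow_atTop_nhds_zero_of_lt_one (by norm_num) (by norm_num)
  have hlim := ((ht.const_mul 7203).const_sub 4704).inv₀ (by norm_num) |>.const_mul 32 |>.const_add 1
  convert hlim using 2 <;> norm_num [f₂Formula, div_eq_mul_inv]

lemma f₂Formula_eq_div {p : ℕ} (hp : 1 ≤ p) :
    f₂Formula p = (4 ^ p * 7203 - 7 ^ p * 4736) / (147 * (4 ^ p * 49 - 7 ^ p * 32)) := by
  have hden := f₂Formula_denom_pos hp
  have h7 : (7 : ℝ) ^ p ≠ 0 := by positivity
  rw [f₂Formula, pow_eq_div_pow_mul_pow 4 (by norm_num : (7 : ℝ) ≠ 0)]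
  generalize ((4 : ℝ) / 7) ^ p = t at hden ⊢
  have hne : 147 * (t * 7 ^ p * 49 - 7 ^ p * 32) ≠ 0 := by
    rw [show 147 * (t * 7 ^ p * 49 - 7 ^ p * 32) = -7 ^ p * (4704 - 7203 * t) by ring]
    exact mul_ne_zero (neg_ne_zero.mpr h7) hden.ne'
  rw [one_add_div hden.ne', div_eq_div_iff hden.ne' hne]
  ring

lemma div_eq_f₂Formula (F : ℕ → ℕ → ℝ)
    (hF : ∀ m k : ℕ, F m k = 7 ^ k * m ^ 2 * (2 * m + 5) - 6 * 4 ^ k * m ^ 2)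
    {p : ℕ} (hp : 4 ≤ p) : F 16 (p - 4) / F 8 (p - 3) = f₂Formula p := by
  obtain ⟨n, rfl⟩ : ∃ n, p = n + 4 := ⟨p - 4, by omega⟩
  have hden := f₂Formula_denom_pos (p := n + 4) (by omega)
  set t := ((4 : ℝ) / 7) ^ n
  have h4 := pow_eq_div_pow_mul_pow 4 (by norm_num : (7 : ℝ) ≠ 0) n
  have h7 : (7 : ℝ) ^ n ≠ 0 := by positivity
  have hF16 : F 16 n = 7 ^ n * (9472 - 1536 * t) := by rw [hF, h4]; push_cast; ring
  have hF8 : F 8 (n + 1) = 7 ^ n * (9408 - 1536 * t) := by rw [hF, pow_succ 4, h4]; push_cast; ring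
  have ht : ((4 : ℝ) / 7) ^ (n + 4) = 256 / 2401 * t := by rw [pow_add]; norm_num; ring
  rw [ht] at hden
  rw [show n + 4 - 4 = n by omega, show n + 4 - 3 = n + 1 by omega, hF16, hF8,
    mul_div_mul_left _ _ h7, f₂Formula, ht, one_add_div hden.ne',
    div_eq_div_iff (by linarith) hden.ne']
  ring

/-- Properties of `f₂(p) = F_S(16,p−4)/F_S(8,p−3)`: its closed form, monotone
decrease, value at `p = 4`, and limit `148/147`. -/
theorem strassen_f2_properties
    (F : ℕ → ℕ → ℝ)
    (hF : ∀ m k : ℕ, F m k = 7 ^ k * m ^ 2 * (2 * m + 5) - 6 * 4 ^ k * m ^ 2)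
    (f₂ : ℕ → ℝ)
    (hf₂ : ∀ p : ℕ, 4 ≤ p → f₂ p = F 16 (p - 4) / F 8 (p - 3)) :
    (∀ p : ℕ, 4 ≤ p →
      f₂ p = (4 ^ p * 7203 - 7 ^ p * 4736) / (147 * (4 ^ p * 49 - 7 ^ p * 32))) ∧
    (∀ p q : ℕ, 4 ≤ p → p ≤ q → f₂ q ≤ f₂ p) ∧
    f₂ 4 = 124 / 123 ∧
    Tendsto f₂ atTop (nhds (148 / 147)) := by
  have hf : ∀ p, 4 ≤ p → f₂ p = f₂Formula p := fun p hp =>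
    (hf₂ p hp).trans (div_eq_f₂Formula F hF hp)
  refine ⟨fun p hp => (hf p hp).trans (f₂Formula_eq_div (by omega)), ?_, ?_, ?_⟩
  · intro p q hp hpq
    rw [hf p hp, hf q (hp.trans hpq)]
    exact f₂Formula_le_of_le (by omega) hpq
  · rw [hf 4 le_rfl]
    norm_num [f₂Formula]
  · exact tendsto_f₂Formula.congr' ((eventually_ge_atTop 4).mono fun p hp => (hf p hp).symm)
end

section
/- For every n ≥ 16 and Strassen's parameters k = ⌊log₂ n⌋ − 4, m = ⌊n·2^{−k}⌋ + 1, the flop count satisfies F_S(m,k) < 4.7·n^{log₂ 7}. -/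
/-!
With `k = ⌊log₂ n⌋ - 4` we have `2 ^ (k + 4) ≤ n < 2 ^ (k + 5)`, so the block count
`j = ⌊n / 2 ^ k⌋ = m - 1` lies in `[16, 32)` and `n ≥ 2 ^ k j`, whence
`n ^ log₂ 7 ≥ 7 ^ k j ^ log₂ 7`. Dropping the negative term `6 · 4 ^ k m²`, it remains to check
`m² (2m + 5) < 4.7 (m - 1) ^ log₂ 7` for the sixteen values `m = 17, …, 32`. Replacing `log₂ 7`
by its lower bound `393 / 140` turns this into an integer inequality, which is decided.
The margin is thin at `m = 17` (about 0.1%), which is why such a close rational bound is needed.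
-/

open Real

lemma Nat.div_pow_log_sub_mem_Ico {b n j : ℕ} (hj0 : j ≠ 0) (hj : j ≤ Nat.log b n) :
    n / b ^ (Nat.log b n - j) ∈ Set.Ico (b ^ j) (b ^ (j + 1)) := by
  rw [Set.mem_Ico, ← Nat.log_eq_iff (Or.inl hj0), Nat.log_div_base_pow]
  omega

lemma Real.pow_rpow_logb {b a : ℝ} (hb0 : 0 < b) (hb1 : b ≠ 1) (ha : 0 < a) (k : ℕ) :
    (b ^ k) ^ logb b a = a ^ k := by
  rw [← rpow_pow_comm hb0.le, rpow_logb hb0 hb1 ha]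

lemma Real.lt_rpow_of_pow_lt {x c y : ℝ} {p q : ℕ} (hx : 1 ≤ x) (hq : q ≠ 0)
    (hy : (p / q : ℝ) ≤ y) (h : c ^ q < x ^ p) : c < x ^ y := by
  have hpq : (x ^ ((p : ℝ) / q)) ^ q = x ^ p := by
    rw [← rpow_natCast _ q, ← rpow_mul (by linarith), div_mul_cancel₀ _ (by exact_mod_cast hq),
      rpow_natCast]
  calc c < x ^ ((p : ℝ) / q) := lt_of_pow_lt_pow_left₀ q (by positivity) (hpq ▸ h)
    _ ≤ x ^ y := rpow_le_rpow_of_exponent_le hx hy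

lemma div_le_logb_two_seven : (393 / 140 : ℝ) ≤ logb 2 7 := by
  have h : (2 : ℝ) ^ 393 ≤ 7 ^ 140 := by
    rw [show 393 = 3 * 131 from rfl, pow_mul]; norm_num
  rw [le_logb_iff_rpow_le (by norm_num) (by norm_num)]
  refine le_of_pow_le_pow_left₀ (n := 140) (by norm_num) (by norm_num) ?_
  rw [← rpow_natCast, ← rpow_mul (by norm_num),
    show (393 / 140 : ℝ) * (140 : ℕ) = (393 : ℕ) by norm_num, rpow_natCast]
  exact h

lemma strassen_block_cost_pow_lt :
    ∀ j < 32, 16 ≤ j → (10 * ((j + 1) ^ 2 * (2 * j + 7))) ^ 140 < 47 ^ 140 * (j ^ 3) ^ 131 := by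
  decide

lemma strassen_block_cost_lt {j : ℕ} (h16 : 16 ≤ j) (h32 : j < 32) :
    ((j : ℝ) + 1) ^ 2 * (2 * ((j : ℝ) + 1) + 5) < 4.7 * (j : ℝ) ^ logb 2 7 := by
  have h : (10 * (((j : ℝ) + 1) ^ 2 * (2 * j + 7)) / 47) ^ 140 < (j : ℝ) ^ 393 := by
    have hN := Nat.cast_lt (α := ℝ).mpr (strassen_block_cost_pow_lt j h32 h16)
    simp only [Nat.cast_mul, Nat.cast_pow, Nat.cast_add, Nat.cast_ofNat, Nat.cast_one] at hN
    rw [div_pow, div_lt_iff₀ (by positivity), show 393 = 3 * 131 from rfl, pow_mul]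
    exact hN.trans_eq (mul_comm _ _)
  have := Real.lt_rpow_of_pow_lt (by exact_mod_cast (by omega : 1 ≤ j)) (by norm_num)
    div_le_logb_two_seven h
  linarith

/-- Strassen's bound: for `n ≥ 16` and his parameters `k = ⌊log₂ n⌋ − 4`,
`m = ⌊n 2^{−k}⌋ + 1`, the flop count satisfies `F_S(m,k) < 4.7 n^{log₂ 7}`. -/
theorem strassen_total_bound (n : ℕ) (hn : 16 ≤ n)
    (k : ℕ) (hk : k = Nat.log 2 n - 4)
    (m : ℕ) (hm : m = n / 2 ^ k + 1) :
    (7 : ℝ) ^ k * m ^ 2 * (2 * m + 5) - 6 * 4 ^ k * m ^ 2 <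
      4.7 * (n : ℝ) ^ (Real.logb 2 7) := by
  set j := n / 2 ^ k
  obtain ⟨h16, h32⟩ : 2 ^ 4 ≤ j ∧ j < 2 ^ 5 :=
    hk ▸ Nat.div_pow_log_sub_mem_Ico (by norm_num) (Nat.le_log_of_pow_le (by norm_num) hn)
  have hpad : (2 : ℝ) ^ k * j ≤ n := by exact_mod_cast Nat.mul_div_le n (2 ^ k)
  subst hm
  push_cast
  calc (7 : ℝ) ^ k * ((j : ℝ) + 1) ^ 2 * (2 * ((j : ℝ) + 1) + 5) - 6 * 4 ^ k * ((j : ℝ) + 1) ^ 2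
      ≤ 7 ^ k * (((j : ℝ) + 1) ^ 2 * (2 * ((j : ℝ) + 1) + 5)) := by
        rw [← mul_assoc]; exact sub_le_self _ (by positivity)
    _ < 7 ^ k * (4.7 * (j : ℝ) ^ logb 2 7) :=
        mul_lt_mul_of_pos_left (strassen_block_cost_lt h16 h32) (by positivity)
    _ = 4.7 * ((2 : ℝ) ^ k * j) ^ logb 2 7 := by
        rw [mul_rpow (by positivity) (by positivity),
          Real.pow_rpow_logb (by norm_num) (by norm_num) (by norm_num)]
        ring
    _ ≤ 4.7 * (n : ℝ) ^ logb 2 7 := by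
        gcongr; exact logb_nonneg (by norm_num) (by norm_num)
end

section
/- For n = 2^p with p ≥ 4, F_S(17, p−4) / F_S(8, p−3) > 1.19 for all p ≥ 4, where F_S(m,k) = 7^k·m^2·(2m+5) − 6·4^k·m^2; i.e., Strassen's parameters require at least 19% more flops than the optimal decomposition in the worst case. -/
/-!
Writing `a = 7^k` and `b = 4^k`, the two flop counts are `F_S(17, k) = 289 (39 a - 6 b)` and
`F_S(8, k + 1) = 64 (147 a - 24 b)`. Since `0 < b ≤ a`, the denominator is positive, and clearing
it the claim becomes `75.48 a + 93.84 b > 0`.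
-/

lemma strassen_overhead_ratio_gt {a b : ℝ} (hb : 0 < b) (hba : b ≤ a) :
    1.19 < 289 * (39 * a - 6 * b) / (64 * (147 * a - 24 * b)) := by
  have hden : 0 < 64 * (147 * a - 24 * b) := by linarith
  rw [lt_div_iff₀ hden]
  linarith

/-- For `p ≥ 4`, Strassen's parameters need more than 19 % extra flops compared to
the optimal decomposition: `F_S(17,p−4)/F_S(8,p−3) > 1.19`. -/
theorem strassen_worst_case_overhead (p : ℕ) (hp : 4 ≤ p)
    (F : ℕ → ℕ → ℝ)
    (hF : ∀ m k : ℕ, F m k = 7 ^ k * m ^ 2 * (2 * m + 5) - 6 * 4 ^ k * m ^ 2) :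
    F 17 (p - 4) / F 8 (p - 3) > 1.19 := by
  obtain ⟨k, rfl⟩ : ∃ k, p = k + 4 := ⟨p - 4, by omega⟩
  have hstrassen : F 17 (k + 4 - 4) = 289 * (39 * 7 ^ k - 6 * 4 ^ k) := by
    rw [Nat.add_sub_cancel, hF]
    push_cast
    ring
  have hoptimal : F 8 (k + 4 - 3) = 64 * (147 * 7 ^ k - 24 * 4 ^ k) := by
    rw [show k + 4 - 3 = k + 1 by omega, hF]
    push_cast
    ring
  rw [hstrassen, hoptimal]
  exact strassen_overhead_ratio_gt (by positivity) (pow_le_pow_left₀ (by norm_num) (by norm_num) k)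
end
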